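/- There exists a universal constant C such that for every t > 0 and every h ∈ ℝ^d with 0 < |h| ≤ 1 (only |h| enters, so equivalently for every real r = |h| ∈ (0,1]): ∫₀^t 1_{\{t−s ≤ 1\}} · min{ |h| / √(t−s), 1 } · (t−s)^{−1/2} ds ≤ C · log(2/|h|) · √t · min{ |h|/√t, 1 }. -/

import Mathlib

open MeasureTheory Real Set

/-- The integrand as a function of `u = t - s`. -/
noncomputable def stmt17F (r : ℝ) : ℝ → ℝ := fun u =>
  (if u ≤ 1 then (1 : ℝ) else 0) * min (r / Real.sqrt u) 1 * u ^ (-(1 : ℝ) / 2)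

lemma stmt17F_meas (r : ℝ) : Measurable (stmt17F r) := by
  unfold stmt17F
  apply Measurable.mul
  apply Measurable.mul
  · exact Measurable.ite measurableSet_Iic measurable_const measurable_const
  · fun_prop
  · fun_prop

lemma stmt17F_nonneg (r : ℝ) (hr : 0 ≤ r) (u : ℝ) (hu : 0 ≤ u) : 0 ≤ stmt17F r u := by
  unfold stmt17F
  apply mul_nonneg (mul_nonneg _ _) (Real.rpow_nonneg hu _)
  · split <;> norm_num
  · exact le_min (div_nonneg hr (Real.sqrt_nonneg u)) zero_le_one

lemma stmt17F_le_rpow (r : ℝ) (hr : 0 ≤ r) (u : ℝ) (hu : 0 ≤ u) :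
    stmt17F r u ≤ u ^ (-(1 : ℝ) / 2) := by
  unfold stmt17F
  have h1 : (if u ≤ 1 then (1 : ℝ) else 0) * min (r / Real.sqrt u) 1 ≤ 1 := by
    have h2 := min_le_right (r / Real.sqrt u) 1
    have h0 : 0 ≤ min (r / Real.sqrt u) 1 :=
      le_min (div_nonneg hr (Real.sqrt_nonneg u)) zero_le_one
    split <;> nlinarith
  calc (if u ≤ 1 then (1 : ℝ) else 0) * min (r / Real.sqrt u) 1 * u ^ (-(1 : ℝ) / 2)
      ≤ 1 * u ^ (-(1 : ℝ) / 2) :=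
        mul_le_mul_of_nonneg_right h1 (Real.rpow_nonneg hu _)
    _ = u ^ (-(1 : ℝ) / 2) := one_mul _

lemma stmt17F_le_div (r : ℝ) (hr : 0 ≤ r) (u : ℝ) (hu : 0 < u) :
    stmt17F r u ≤ r * u⁻¹ := by
  unfold stmt17F
  have hsu : 0 < Real.sqrt u := Real.sqrt_pos.2 hu
  have hrpow : u ^ (-(1 : ℝ) / 2) = (Real.sqrt u)⁻¹ := by
    rw [Real.sqrt_eq_rpow, ← Real.rpow_neg hu.le]
    norm_num
  have h1 : (if u ≤ 1 then (1 : ℝ) else 0) * min (r / Real.sqrt u) 1 ≤ r / Real.sqrt u := by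
    have h2 := min_le_left (r / Real.sqrt u) 1
    have h0 : 0 ≤ min (r / Real.sqrt u) 1 :=
      le_min (div_nonneg hr (Real.sqrt_nonneg u)) zero_le_one
    have h3 : 0 ≤ r / Real.sqrt u := div_nonneg hr (Real.sqrt_nonneg u)
    split <;> nlinarith
  calc (if u ≤ 1 then (1 : ℝ) else 0) * min (r / Real.sqrt u) 1 * u ^ (-(1 : ℝ) / 2)
      ≤ (r / Real.sqrt u) * u ^ (-(1 : ℝ) / 2) :=
        mul_le_mul_of_nonneg_right h1 (Real.rpow_nonneg hu.le _)
    _ = r * u⁻¹ := by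
        rw [hrpow, div_eq_mul_inv, mul_assoc, ← mul_inv, Real.mul_self_sqrt hu.le]

lemma stmt17F_integrable (r : ℝ) (hr : 0 ≤ r) (a b : ℝ) (ha : 0 ≤ a) (hb : 0 ≤ b) :
    IntervalIntegrable (stmt17F r) volume a b := by
  apply (intervalIntegral.intervalIntegrable_rpow'
    (by norm_num : (-1 : ℝ) < -(1 : ℝ)/2)).mono_fun
    ((stmt17F_meas r).aestronglyMeasurable)
  filter_upwards [ae_restrict_mem measurableSet_uIoc] with u hu
  have hu0 : 0 < u := lt_of_le_of_lt (le_min ha hb) hu.1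
  rw [Real.norm_of_nonneg (stmt17F_nonneg r hr u hu0.le),
    Real.norm_of_nonneg (Real.rpow_nonneg hu0.le _)]
  exact stmt17F_le_rpow r hr u hu0.le

lemma stmt17_int_rpow (b : ℝ) :
    ∫ u in (0:ℝ)..b, u ^ (-(1 : ℝ) / 2) = 2 * Real.sqrt b := by
  have h0 : (0:ℝ) ^ (-(1:ℝ)/2 + 1) = 0 := by
    rw [Real.zero_rpow]; norm_num
  rw [integral_rpow (Or.inl (by norm_num)), h0, Real.sqrt_eq_rpow, sub_zero,
      show (-(1:ℝ)/2 + 1) = 1/2 by norm_num]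
  rw [div_eq_iff (by norm_num : (1:ℝ)/2 ≠ 0)]
  ring

/-- There is a universal constant `C` such that for every `t > 0` and
every `r = |h| ∈ (0,1]`:
`∫₀^t 1_{t−s≤1} · min{r/√(t−s), 1} · (t−s)^{−1/2} ds ≤ C · log(2/r) · √t · min{r/√t, 1}`. -/
theorem statement_17 :
    ∃ C : ℝ, ∀ t : ℝ, 0 < t → ∀ r : ℝ, 0 < r → r ≤ 1 →
      (∫ s in (0 : ℝ)..t,
          (if t - s ≤ 1 then (1 : ℝ) else 0) * min (r / Real.sqrt (t - s)) 1 *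
            (t - s) ^ (-(1 : ℝ) / 2))
        ≤ C * Real.log (2 / r) * Real.sqrt t * min (r / Real.sqrt t) 1 := by
  refine ⟨6, fun t ht r hr hr1 => ?_⟩
  have hst : 0 < Real.sqrt t := Real.sqrt_pos.2 ht
  set L := Real.log (2 / r) with hLdef
  have hL2 : Real.log 2 ≤ L := by
    apply Real.log_le_log (by norm_num)
    rw [le_div_iff₀ hr]; nlinarith
  have hL : (2⁻¹ : ℝ) ≤ L := le_trans (by nlinarith [Real.log_two_gt_d9]) hL2
  have hsub :
      (∫ s in (0 : ℝ)..t,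
          (if t - s ≤ 1 then (1 : ℝ) else 0) * min (r / Real.sqrt (t - s)) 1 *
            (t - s) ^ (-(1 : ℝ) / 2)) = ∫ u in (0:ℝ)..t, stmt17F r u := by
    have h := intervalIntegral.integral_comp_sub_left (a := 0) (b := t) (stmt17F r) t
    simp only [sub_zero, sub_self] at h
    rw [← h]; rfl
  rcases le_or_gt t (r ^ 2) with hcase | hcase
  · -- small t : min = 1
    have hstr : Real.sqrt t ≤ r := by
      calc Real.sqrt t ≤ Real.sqrt (r ^ 2) := Real.sqrt_le_sqrt hcase
        _ = r := Real.sqrt_sq hr.le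
    have hmin : min (r / Real.sqrt t) 1 = 1 :=
      min_eq_right ((le_div_iff₀ hst).2 (by linarith))
    rw [hsub, hmin, mul_one]
    have hle : ∫ u in (0:ℝ)..t, stmt17F r u ≤ 2 * Real.sqrt t := by
      have h := intervalIntegral.integral_mono_on ht.le
        (stmt17F_integrable r hr.le 0 t le_rfl ht.le)
        (intervalIntegral.intervalIntegrable_rpow' (by norm_num))
        (fun u hu => stmt17F_le_rpow r hr.le u hu.1)
      rwa [stmt17_int_rpow t] at h
    nlinarith [mul_nonneg (show (0:ℝ) ≤ L - 2⁻¹ by linarith) hst.le]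
  · -- large t : min = r / √t
    have hrt : r ≤ Real.sqrt t := by
      rw [show r = Real.sqrt (r ^ 2) from (Real.sqrt_sq hr.le).symm]
      exact Real.sqrt_le_sqrt hcase.le
    have hmin : min (r / Real.sqrt t) 1 = r / Real.sqrt t :=
      min_eq_left ((div_le_one hst).2 hrt)
    set b := min t 1 with hbdef
    have hb0 : 0 < b := lt_min ht one_pos
    have hb1 : b ≤ 1 := min_le_right _ _
    have hbt : b ≤ t := min_le_left _ _
    have hr2b : r ^ 2 ≤ b := le_min hcase.le (by nlinarith)
    have hi1 : IntervalIntegrable (stmt17F r) volume 0 (r ^ 2) :=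
      stmt17F_integrable r hr.le _ _ le_rfl (by positivity)
    have hi2 : IntervalIntegrable (stmt17F r) volume (r ^ 2) b :=
      stmt17F_integrable r hr.le _ _ (by positivity) hb0.le
    have hi3 : IntervalIntegrable (stmt17F r) volume b t :=
      stmt17F_integrable r hr.le _ _ hb0.le ht.le
    have hsplit : ∫ u in (0:ℝ)..t, stmt17F r u
        = (∫ u in (0:ℝ)..(r ^ 2), stmt17F r u) + ((∫ u in (r ^ 2)..b, stmt17F r u)
          + ∫ u in b..t, stmt17F r u) := by
      rw [intervalIntegral.integral_add_adjacent_intervals hi2 hi3,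
          intervalIntegral.integral_add_adjacent_intervals hi1 (hi2.trans hi3)]
    have hI1 : ∫ u in (0:ℝ)..(r ^ 2), stmt17F r u ≤ 2 * r := by
      have h := intervalIntegral.integral_mono_on (by positivity : (0:ℝ) ≤ r ^ 2) hi1
        (intervalIntegral.intervalIntegrable_rpow' (by norm_num))
        (fun u hu => stmt17F_le_rpow r hr.le u hu.1)
      rw [stmt17_int_rpow (r ^ 2), Real.sqrt_sq hr.le] at h
      exact h
    have hInv : IntervalIntegrable (fun u => r * u⁻¹) volume (r ^ 2) b := by
      apply ContinuousOn.intervalIntegrable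
      apply ContinuousOn.mul continuousOn_const
      apply ContinuousOn.inv₀ continuousOn_id
      intro x hx
      rw [Set.uIcc_of_le hr2b] at hx
      have hrr : (0:ℝ) < r ^ 2 := by positivity
      exact ne_of_gt (lt_of_lt_of_le hrr hx.1)
    have hI2 : ∫ u in (r ^ 2)..b, stmt17F r u ≤ r * (Real.log b - 2 * Real.log r) := by
      have hmono := intervalIntegral.integral_mono_on hr2b hi2 hInv
        (fun u hu => stmt17F_le_div r hr.le u (lt_of_lt_of_le (by positivity) hu.1))
      rw [intervalIntegral.integral_const_mul, integral_inv] at hmono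
      · rw [Real.log_div hb0.ne' (by positivity), Real.log_pow] at hmono
        push_cast at hmono
        linarith
      · rw [Set.uIcc_of_le hr2b]
        rintro ⟨h1, h2⟩
        nlinarith
    have hI3 : ∫ u in b..t, stmt17F r u = 0 := by
      rcases le_or_gt t 1 with h | h
      · rw [show b = t from min_eq_left h, intervalIntegral.integral_same]
      · rw [show b = (1:ℝ) from min_eq_right h.le]
        rw [intervalIntegral.integral_congr_ae (g := fun _ => (0:ℝ))
          (ae_of_all _ fun u hu => ?_), intervalIntegral.integral_zero]
        rw [Set.uIoc_of_le h.le] at hu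
        simp [stmt17F, not_le.2 hu.1]
    have hlogb : Real.log b ≤ 0 := Real.log_nonpos hb0.le hb1
    have hlogr : Real.log r ≤ 0 := Real.log_nonpos hr.le hr1
    have hLeq : L = Real.log 2 - Real.log r := Real.log_div (by norm_num) hr.ne'
    have hlog2 : (0:ℝ) ≤ Real.log 2 := Real.log_nonneg (by norm_num)
    have hRHS : 6 * L * Real.sqrt t * (r / Real.sqrt t) = 6 * L * r := by
      field_simp
    rw [hsub, hmin, hRHS, hsplit, hI3, add_zero]
    have hkey : r * (Real.log b - 2 * Real.log r) ≤ r * (2 * L) := by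
      apply mul_le_mul_of_nonneg_left _ hr.le
      linarith
    nlinarith [mul_nonneg (show (0:ℝ) ≤ 2 * L - 1 by linarith) hr.le]
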